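/- Let X be a real Banach space and let Y be a nonzero closed subspace of X which is an almost isometric ideal (ai-ideal) in X. Then T(X) ≤ T(Y) and t(Y) ≤ t(X). -/

import Mathlib

/-- The thinness index `t(X)` of a normed space. -/
noncomputable def thinness (X : Type*) [NormedAddCommGroup X] : ℝ :=
  sInf {r : ℝ | 0 < r ∧ ∀ (n : ℕ) (x : Fin n → X), (∀ i, ‖x i‖ = 1) →
    ∀ ε : ℝ, 0 < ε → ∃ y : X, ‖y‖ = 1 ∧ ∀ i, ‖x i - y‖ < r + ε}

/-- The thickness index `T(X)` of a normed space. -/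
noncomputable def thickness (X : Type*) [NormedAddCommGroup X] : ℝ :=
  sInf {r : ℝ | 0 < r ∧ ∃ (n : ℕ) (x : Fin n → X), (∀ i, ‖x i‖ = 1) ∧
    Metric.closedBall (0 : X) 1 ⊆ ⋃ i, Metric.closedBall (x i) r}

/-- A subspace `Y` of `X` is an almost isometric ideal (ai-ideal) in `X` if for every
`ε > 0` and every finite-dimensional subspace `E ⊆ X` there is a linear map `T : E → Y`
fixing `Y ∩ E` pointwise with `(1+ε)⁻¹ ‖e‖ ≤ ‖T e‖ ≤ (1+ε) ‖e‖` for all `e ∈ E`. -/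
def IsAIIdeal (X : Type*) [NormedAddCommGroup X] [NormedSpace ℝ X]
    (Y : Subspace ℝ X) : Prop :=
  ∀ ε : ℝ, 0 < ε → ∀ E : Subspace ℝ X, FiniteDimensional ℝ E →
    ∃ T : E →ₗ[ℝ] Y, (∀ e : E, (e : X) ∈ Y → ((T e : Y) : X) = (e : X)) ∧
      ∀ e : E, (1 + ε)⁻¹ * ‖(e : X)‖ ≤ ‖((T e : Y) : X)‖ ∧
        ‖((T e : Y) : X)‖ ≤ (1 + ε) * ‖(e : X)‖

/-! Given a point `x` of `X` and finitely many points of `Y`, the ai-ideal property provides a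
point `w` of `Y` whose distances to those points of `Y` (and to `0`) agree with those of `x` up
to a factor `1 + ε`. Hence a finite covering of `B_Y` by balls centred on `S_Y` also covers
`B_X` after enlarging the radius slightly (rescale `w` into `B_Y`), and a point of `S_X` almost
at distance `r` from given points of `S_Y` can be replaced by a point of `S_Y` (normalise `w`)
at the cost of an arbitrarily small increase of `r`. -/

open Metric Set Filter Topology

section Radii

variable (X : Type*) [NormedAddCommGroup X]

def IsThinnessRadius (r : ℝ) : Prop :=
  ∀ (n : ℕ) (x : Fin n → X), (∀ i, ‖x i‖ = 1) →
    ∀ ε : ℝ, 0 < ε → ∃ y : X, ‖y‖ = 1 ∧ ∀ i, ‖x i - y‖ < r + ε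

def IsThicknessRadius (r : ℝ) : Prop :=
  ∃ (n : ℕ) (x : Fin n → X), (∀ i, ‖x i‖ = 1) ∧ closedBall (0 : X) 1 ⊆ ⋃ i, closedBall (x i) r

theorem thinness_eq : thinness X = sInf {r | 0 < r ∧ IsThinnessRadius X r} := rfl

theorem thickness_eq : thickness X = sInf {r | 0 < r ∧ IsThicknessRadius X r} := rfl

variable [NormedSpace ℝ X] [Nontrivial X]

theorem isThinnessRadius_two : IsThinnessRadius X 2 := by
  obtain ⟨u, hu⟩ := exists_norm_eq X zero_le_one
  intro n x hx ε hε
  exact ⟨u, hu, fun i => (norm_sub_le _ _).trans_lt (by rw [hx i, hu]; linarith)⟩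

theorem isThicknessRadius_two : IsThicknessRadius X 2 := by
  obtain ⟨u, hu⟩ := exists_norm_eq X zero_le_one
  refine ⟨1, fun _ => u, fun _ => hu, fun z hz => mem_iUnion.2 ⟨0, ?_⟩⟩
  exact closedBall_subset_closedBall' (by rw [dist_zero_left, hu]; norm_num) hz

end Radii

theorem csInf_le_csInf_of_forall_add_mem {S T : Set ℝ} (hS : S.Nonempty) (hT : BddBelow T)
    (h : ∀ r ∈ S, ∀ δ > 0, r + δ ∈ T) : sInf T ≤ sInf S :=
  le_csInf hS fun r hr => le_of_forall_pos_le_add fun δ hδ => csInf_le hT (h r hr δ hδ)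

-- The error budget of both transfers: the ai-ideal map distorts distances by a factor `1 + γ`,
-- and moving its output back to the ball or sphere costs another `γ`.
theorem exists_pos_one_add_mul_add_add_lt (r : ℝ) {δ : ℝ} (hδ : 0 < δ) :
    ∃ γ, 0 < γ ∧ (1 + γ) * (r + γ) + γ < r + δ := by
  have hlim : Tendsto (fun γ : ℝ => (1 + γ) * (r + γ) + γ) (𝓝[>] 0) (𝓝 r) := by
    have : Continuous fun γ : ℝ => (1 + γ) * (r + γ) + γ := by fun_prop
    simpa using (this.tendsto 0).mono_left nhdsWithin_le_nhds
  exact ((hlim.eventually (gt_mem_nhds (by linarith))).and self_mem_nhdsWithin).exists.imp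
    fun _ h => ⟨h.2, h.1⟩

theorem dist_inv_smul_self {E : Type*} [NormedAddCommGroup E] [NormedSpace ℝ E] (w : E)
    {c : ℝ} (hc : 0 < c) : dist w (c⁻¹ • w) = |c - 1| / c * ‖w‖ := by
  have hsub : w - c⁻¹ • w = ((c - 1) / c) • w := by
    rw [sub_div, div_self hc.ne', div_eq_inv_mul, mul_one, sub_smul, one_smul]
  rw [dist_eq_norm, hsub, norm_smul, Real.norm_eq_abs, abs_div, abs_of_pos hc]

namespace IsAIIdeal

variable {X : Type*} [NormedAddCommGroup X] [NormedSpace ℝ X] {Y : Subspace ℝ X}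

theorem exists_forall_dist_le (hY : IsAIIdeal X Y) (x : X) {s : Set Y} (hs : s.Finite)
    {ε : ℝ} (hε : 0 < ε) :
    ∃ w : Y, ∀ y ∈ s, (1 + ε)⁻¹ * dist x y ≤ dist w y ∧ dist w y ≤ (1 + ε) * dist x y := by
  set E : Subspace ℝ X := Submodule.span ℝ (insert x ((↑) '' s))
  have : FiniteDimensional ℝ E := FiniteDimensional.span_of_finite ℝ ((hs.image _).insert x)
  obtain ⟨T, hfix, hbd⟩ := hY ε hε E inferInstance
  have hxE : x ∈ E := Submodule.subset_span (mem_insert _ _)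
  refine ⟨T ⟨x, hxE⟩, fun y hy => ?_⟩
  have hyE : (y : X) ∈ E := Submodule.subset_span (mem_insert_of_mem _ (mem_image_of_mem _ hy))
  have hTy : T ⟨y, hyE⟩ = y := Subtype.ext (hfix _ y.2)
  have hTsub : T (⟨x, hxE⟩ - ⟨y, hyE⟩) = T ⟨x, hxE⟩ - y := by rw [map_sub, hTy]
  simpa only [hTsub, dist_eq_norm, Submodule.coe_sub, Submodule.coe_norm] using
    hbd (⟨x, hxE⟩ - ⟨y, hyE⟩)

theorem closedBall_subset_iUnion (hY : IsAIIdeal X Y) {ι : Type*} [Finite ι] {y : ι → Y}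
    {r δ : ℝ} (hδ : 0 < δ) (hcov : closedBall (0 : Y) 1 ⊆ ⋃ i, closedBall (y i) r) :
    closedBall (0 : X) 1 ⊆ ⋃ i, closedBall (y i : X) (r + δ) := by
  obtain ⟨γ, hγ, hγδ⟩ := exists_pos_one_add_mul_add_add_lt r hδ
  intro x hx
  obtain ⟨w, hw⟩ := hY.exists_forall_dist_le x ((finite_range y).insert 0) hγ
  have hw0 : ‖w‖ ≤ 1 + γ := by
    have := (hw 0 (mem_insert _ _)).2
    rw [mem_closedBall] at hx
    simp only [ZeroMemClass.coe_zero, dist_zero_right] at this hx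
    nlinarith
  have hz : (1 + γ)⁻¹ • w ∈ closedBall (0 : Y) 1 := by
    rw [mem_closedBall, dist_zero_right, norm_smul, Real.norm_of_nonneg (by positivity)]
    exact inv_mul_le_one_of_le₀ hw0 (by positivity)
  obtain ⟨i, hi⟩ := mem_iUnion.1 (hcov hz)
  have hwz : dist w ((1 + γ)⁻¹ • w) ≤ γ := by
    rw [dist_inv_smul_self w (by positivity), add_sub_cancel_left, abs_of_pos hγ]
    calc γ / (1 + γ) * ‖w‖ ≤ γ / (1 + γ) * (1 + γ) := by gcongr
      _ = γ := div_mul_cancel₀ γ (by positivity)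
  have hwy : dist w (y i) ≤ γ + r := (dist_triangle _ _ _).trans (add_le_add hwz hi)
  have hxy := (hw (y i) (mem_insert_of_mem _ (mem_range_self i))).1
  rw [inv_mul_le_iff₀ (by positivity)] at hxy
  refine mem_iUnion.2 ⟨i, mem_closedBall.2 ?_⟩
  calc dist x (y i) ≤ (1 + γ) * (γ + r) := hxy.trans (by gcongr)
    _ ≤ r + δ := by nlinarith

theorem isThicknessRadius_add (hY : IsAIIdeal X Y) {r δ : ℝ} (hr : IsThicknessRadius Y r)
    (hδ : 0 < δ) : IsThicknessRadius X (r + δ) := by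
  obtain ⟨n, y, hy, hcov⟩ := hr
  exact ⟨n, fun i => y i, hy, hY.closedBall_subset_iUnion hδ hcov⟩

theorem isThinnessRadius_add (hY : IsAIIdeal X Y) {r δ : ℝ} (hr : IsThinnessRadius X r)
    (hδ : 0 < δ) : IsThinnessRadius Y (r + δ) := by
  intro n y hy ε hε
  obtain ⟨γ, hγ, hγδ⟩ := exists_pos_one_add_mul_add_add_lt r hδ
  obtain ⟨x, hx, hxy⟩ := hr n (fun i => y i) hy γ hγ
  obtain ⟨w, hw⟩ := hY.exists_forall_dist_le x ((finite_range y).insert 0) hγ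
  have hw0 : (1 + γ)⁻¹ ≤ ‖w‖ ∧ ‖w‖ ≤ 1 + γ := by
    simpa only [ZeroMemClass.coe_zero, dist_zero_right, hx, mul_one] using hw 0 (mem_insert _ _)
  have hwpos : 0 < ‖w‖ := (inv_pos.2 (by positivity)).trans_le hw0.1
  have hwz : dist w (‖w‖⁻¹ • w) ≤ γ := by
    rw [dist_inv_smul_self w hwpos, div_mul_cancel₀ _ hwpos.ne', abs_le]
    have : 1 - γ ≤ (1 + γ)⁻¹ := by
      rw [← one_div, le_div_iff₀ (by positivity)]
      nlinarith
    constructor <;> linarith [hw0.1, hw0.2]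
  refine ⟨‖w‖⁻¹ • w, norm_smul_inv_norm (norm_pos_iff.1 hwpos), fun i => ?_⟩
  have hyw : dist (y i) w ≤ (1 + γ) * (r + γ) := by
    rw [dist_comm]
    refine (hw (y i) (mem_insert_of_mem _ (mem_range_self i))).2.trans ?_
    rw [dist_eq_norm, ← norm_neg, neg_sub]
    gcongr
    exact (hxy i).le
  rw [← dist_eq_norm]
  linarith [dist_triangle (y i) w (‖w‖⁻¹ • w)]

end IsAIIdeal

theorem thinness_thickness_of_aiIdeal
    (X : Type*) [NormedAddCommGroup X] [NormedSpace ℝ X]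
    (Y : Subspace ℝ X) [Nontrivial Y]
    (hY : IsAIIdeal X Y) :
    thickness X ≤ thickness Y ∧ thinness Y ≤ thinness X := by
  have : Nontrivial X := Y.subtype_injective.nontrivial
  have hbdd : ∀ P : ℝ → Prop, BddBelow {r : ℝ | 0 < r ∧ P r} := fun _ => ⟨0, fun _ h => h.1.le⟩
  rw [thickness_eq, thickness_eq, thinness_eq, thinness_eq]
  exact ⟨csInf_le_csInf_of_forall_add_mem ⟨2, two_pos, isThicknessRadius_two Y⟩ (hbdd _)
      fun r hr δ hδ => ⟨by linarith [hr.1], hY.isThicknessRadius_add hr.2 hδ⟩,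
    csInf_le_csInf_of_forall_add_mem ⟨2, two_pos, isThinnessRadius_two X⟩ (hbdd _)
      fun r hr δ hδ => ⟨by linarith [hr.1], hY.isThinnessRadius_add hr.2 hδ⟩⟩
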